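/- Let n ≥ 2 and let B_n be the braid group on n strands with Artin generators σ_1, …, σ_{n-1}. For 1 ≤ i ≤ n-1 define the strand-i full twist T_i = σ_i σ_{i+1} ⋯ σ_{n-1} · σ_{n-1} ⋯ σ_{i+1} σ_i. Then for every k ≥ 0, the identity (σ_1 σ_2 ⋯ σ_{n-1})^{kn+1} = T_1^k T_2^k ⋯ T_{n-1}^k · (σ_1 σ_2 ⋯ σ_{n-1}) holds in B_n. -/

import Mathlib

/-- The Artin braid relations on `m` generators (0-based internally):
`σ_i σ_{i+1} σ_i = σ_{i+1} σ_i σ_{i+1}` and `σ_i σ_j = σ_j σ_i` for `|i - j| ≥ 2`. -/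
def braidRels (m : ℕ) : Set (FreeGroup (Fin m)) :=
  { r | (∃ i j : Fin m, (i : ℕ) + 1 = (j : ℕ) ∧
          r = FreeGroup.of i * FreeGroup.of j * FreeGroup.of i *
              (FreeGroup.of j * FreeGroup.of i * FreeGroup.of j)⁻¹) ∨
        (∃ i j : Fin m, (i : ℕ) + 2 ≤ (j : ℕ) ∧
          r = FreeGroup.of i * FreeGroup.of j * (FreeGroup.of j * FreeGroup.of i)⁻¹) }

/-- The braid group `B_n` on `n` strands, presented with generators `σ_1, …, σ_{n-1}`. -/
abbrev BraidGroup (n : ℕ) : Type := PresentedGroup (braidRels (n - 1))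

/-- The Artin generator `σ_i` of `B_n`, with the 1-based indexing `1 ≤ i ≤ n - 1`
(junk value `1` outside this range). -/
def sigma (n i : ℕ) : BraidGroup n :=
  if h : 1 ≤ i ∧ i ≤ n - 1 then PresentedGroup.of (⟨i - 1, by omega⟩ : Fin (n - 1)) else 1

/-- The strand-`i` full twist `T_i = σ_i σ_{i+1} ⋯ σ_{n-1} ⋅ σ_{n-1} ⋯ σ_{i+1} σ_i` in `B_n`. -/
def fullTwist (n i : ℕ) : BraidGroup n :=
  ((List.range' i (n - i)).map (sigma n)).prod *
    ((List.range' i (n - i)).reverse.map (sigma n)).prod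

/-! Write `Δ_i = σ_i σ_{i+1} ⋯ σ_{n-1}`. Conjugation by `Δ_i` sends `σ_j` to `σ_{j+1}` for
`i ≤ j ≤ n - 2`; pushing `Δ_i` through its own powers therefore gives
`Δ_i ^ (n - i + 1) = T_i * Δ_{i+1} ^ (n - i)`, and `T_i` commutes with `σ_{i+1}, …, σ_{n-1}`,
hence with `Δ_{i+1}`. Taking `k`-th powers and inducting on `n - i` yields
`Δ_1 ^ (k n) = T_1^k ⋯ T_{n-1}^k`. The companion fact that conjugation by `σ_{n-1} ⋯ σ_i` sends
`σ_{j+1}` to `σ_j` is the same statement read in the opposite monoid. -/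

open MulOpposite

section BraidRels

variable {M : Type*} [Monoid M]

structure BraidRelsOn (s : ℕ → M) (a b : ℕ) : Prop where
  braid : ∀ i, a ≤ i → i + 1 < b → s i * s (i + 1) * s i = s (i + 1) * s i * s (i + 1)
  comm : ∀ i j, a ≤ i → i + 2 ≤ j → j < b → s i * s j = s j * s i

def ascProd (s : ℕ → M) (i b : ℕ) : M := ((List.range' i (b - i)).map s).prod

def descProd (s : ℕ → M) (i b : ℕ) : M := ((List.range' i (b - i)).reverse.map s).prod

def twist (s : ℕ → M) (i b : ℕ) : M := ascProd s i b * descProd s i b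

variable {s : ℕ → M} {a b i j : ℕ}

lemma ascProd_of_le (h : b ≤ i) : ascProd s i b = 1 := by
  simp [ascProd, Nat.sub_eq_zero_of_le h]

lemma ascProd_eq_mul (h : i < b) : ascProd s i b = s i * ascProd s (i + 1) b := by
  rw [ascProd, ascProd, show b - i = b - (i + 1) + 1 by omega, List.range'_succ]
  simp

lemma descProd_eq_mul (h : i < b) : descProd s i b = descProd s (i + 1) b * s i := by
  rw [descProd, descProd, show b - i = b - (i + 1) + 1 by omega, List.range'_succ]
  simp

lemma descProd_succ (h : i ≤ b) : descProd s i (b + 1) = s b * descProd s i b := by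
  rw [descProd, descProd, show b + 1 - i = b - i + 1 by omega, List.range'_1_concat]
  simp [Nat.add_sub_cancel' h]

lemma op_descProd : op (descProd s i b) = ascProd (fun j => op (s j)) i b := by
  simp [descProd, ascProd, op_list_prod, List.map_reverse, Function.comp_def]

namespace BraidRelsOn

lemma mono (h : BraidRelsOn s a b) (ha : a ≤ i) : BraidRelsOn s i b :=
  ⟨fun j hj => h.braid j (ha.trans hj), fun j l hj => h.comm j l (ha.trans hj)⟩

protected lemma op (h : BraidRelsOn s a b) : BraidRelsOn (fun j => op (s j)) a b where
  braid j hj hjb := unop_injective <| by simpa [mul_assoc] using h.braid j hj hjb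
  comm j l hj hjl hlb := unop_injective <| by simpa using (h.comm j l hj hjl hlb).symm

lemma commute_ascProd (h : BraidRelsOn s a b) (ha : a ≤ j) (hj : j + 2 ≤ i) :
    Commute (s j) (ascProd s i b) := by
  refine Commute.list_prod_right _ _ fun x hx => ?_
  obtain ⟨l, hl, rfl⟩ := List.mem_map.mp hx
  rw [List.mem_range'_1] at hl
  exact h.comm j l ha (by omega) (by omega)

lemma ascProd_mul (h : BraidRelsOn s i b) (hij : i ≤ j) (hjb : j + 2 ≤ b) :
    ascProd s i b * s j = s (j + 1) * ascProd s i b := by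
  obtain ⟨d, rfl⟩ := Nat.exists_eq_add_of_le hij
  induction d generalizing i with
  | zero =>
    have hcomm := (h.commute_ascProd (j := i) (i := i + 2) le_rfl le_rfl).eq
    rw [ascProd_eq_mul (by omega), ascProd_eq_mul (by omega), add_zero]
    calc s i * (s (i + 1) * ascProd s (i + 2) b) * s i
        = s i * s (i + 1) * s i * ascProd s (i + 2) b := by simp only [mul_assoc, hcomm]
      _ = s (i + 1) * (s i * (s (i + 1) * ascProd s (i + 2) b)) := by
        rw [h.braid i le_rfl (by omega)]; simp only [mul_assoc]
  | succ d ih =>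
    have hshift := ih (i := i + 1) (h.mono i.le_succ) (by omega) (by omega)
    rw [add_right_comm] at hshift
    rw [ascProd_eq_mul (by omega), mul_assoc, ← add_assoc, hshift, ← mul_assoc,
      h.comm i (i + d + 1 + 1) le_rfl (by omega) (by omega), mul_assoc]

lemma descProd_mul (h : BraidRelsOn s i b) (hij : i ≤ j) (hjb : j + 2 ≤ b) :
    descProd s i b * s (j + 1) = s j * descProd s i b :=
  op_injective <| by simpa [op_descProd] using (h.op.ascProd_mul hij hjb).symm

lemma commute_twist (h : BraidRelsOn s i b) (hij : i ≤ j) (hjb : j + 2 ≤ b) :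
    Commute (twist s i b) (s (j + 1)) := by
  rw [Commute, SemiconjBy, twist, mul_assoc, h.descProd_mul hij hjb, ← mul_assoc,
    h.ascProd_mul hij hjb, mul_assoc]

lemma commute_twist_ascProd (h : BraidRelsOn s i b) :
    Commute (twist s i b) (ascProd s (i + 1) b) := by
  refine Commute.list_prod_right _ _ fun x hx => ?_
  obtain ⟨l, hl, rfl⟩ := List.mem_map.mp hx
  rw [List.mem_range'_1] at hl
  obtain ⟨j, rfl⟩ : ∃ j, l = j + 1 := ⟨l - 1, by omega⟩
  exact h.commute_twist (by omega) (by omega)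

lemma ascProd_mul_descProd (h : BraidRelsOn s i b) {t : ℕ} (ht : i + t < b) :
    ascProd s i b * descProd s i (i + t) = descProd s (i + 1) (i + 1 + t) * ascProd s i b := by
  induction t with
  | zero => simp [descProd]
  | succ t ih =>
    rw [← add_assoc, ← add_assoc, descProd_succ (by omega), descProd_succ (by omega),
      ← mul_assoc, h.ascProd_mul (by omega) (by omega), mul_assoc, ih (by omega), mul_assoc,
      add_right_comm]

lemma ascProd_pow (h : BraidRelsOn s i b) {t : ℕ} (ht : i + t ≤ b) :
    ascProd s i b ^ t = descProd s i (i + t) * ascProd s (i + 1) b ^ t := by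
  induction t with
  | zero => simp [descProd]
  | succ t ih =>
    rw [pow_succ', ih (by omega), ← mul_assoc, h.ascProd_mul_descProd (by omega),
      ascProd_eq_mul (s := s) (by omega), mul_assoc, mul_assoc, ← pow_succ', ← mul_assoc,
      ← descProd_eq_mul (by omega), add_right_comm, ← add_assoc]

lemma ascProd_pow_sub_add_one (h : BraidRelsOn s i b) (hib : i ≤ b) :
    ascProd s i b ^ (b - i + 1) = twist s i b * ascProd s (i + 1) b ^ (b - i) := by
  rw [pow_succ', h.ascProd_pow (t := b - i) (by omega), Nat.add_sub_cancel' hib, ← mul_assoc,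
    twist]

lemma ascProd_pow_mul (h : BraidRelsOn s i b) (k : ℕ) :
    ascProd s i b ^ (k * (b + 1 - i)) =
      ((List.range' i (b - i)).map fun j => twist s j b ^ k).prod := by
  induction hd : b - i generalizing i with
  | zero => simp [ascProd_of_le (show b ≤ i by omega)]
  | succ d ih =>
    rw [Nat.mul_comm, show b + 1 - i = b - i + 1 by omega, pow_mul,
      h.ascProd_pow_sub_add_one (by omega), (h.commute_twist_ascProd.pow_right _).mul_pow,
      ← pow_mul, Nat.mul_comm, ← Nat.add_sub_add_right b 1 i,
      ih (h.mono (Nat.le_succ i)) (by omega), List.range'_succ, List.map_cons, List.prod_cons]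

end BraidRelsOn

end BraidRels

lemma sigma_eq_of {n i : ℕ} (h1 : 1 ≤ i) (h2 : i < n) :
    sigma n i = PresentedGroup.of (⟨i - 1, by omega⟩ : Fin (n - 1)) :=
  dif_pos ⟨h1, by omega⟩

lemma braidRelsOn_sigma (n : ℕ) : BraidRelsOn (sigma n) 1 n where
  braid i hi hin := by
    rw [sigma_eq_of hi (by omega), sigma_eq_of (by omega : 1 ≤ i + 1) hin]
    exact PresentedGroup.mk_eq_mk_of_mul_inv_mem (Or.inl ⟨_, _, by simp; omega, rfl⟩)
  comm i j hi hij hjn := by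
    rw [sigma_eq_of hi (by omega), sigma_eq_of (by omega : 1 ≤ j) hjn]
    exact PresentedGroup.mk_eq_mk_of_mul_inv_mem (Or.inr ⟨_, _, by simp; omega, rfl⟩)

theorem torusBraid_separated_twists_general (n : ℕ) (k : ℕ) :
    (((List.range' 1 (n - 1)).map (sigma n)).prod) ^ (k * n + 1) =
      ((List.range' 1 (n - 1)).map (fun i => (fullTwist n i) ^ k)).prod *
        ((List.range' 1 (n - 1)).map (sigma n)).prod := by
  have h := (braidRelsOn_sigma n).ascProd_pow_mul k
  rw [Nat.add_sub_cancel] at h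
  -- `ascProd (sigma n) 1 n` and `twist (sigma n) i n` unfold to the products in the statement
  exact (pow_succ _ _).trans (congrArg (· * _) h)

/-- For `n ≥ 2` and every `k ≥ 0`, in `B_n` one has
`(σ_1 σ_2 ⋯ σ_{n-1})^(k*n+1) = T_1^k T_2^k ⋯ T_{n-1}^k * (σ_1 σ_2 ⋯ σ_{n-1})`. -/
theorem torusBraid_separated_twists (n : ℕ) (hn : 2 ≤ n) (k : ℕ) :
    (((List.range' 1 (n - 1)).map (sigma n)).prod) ^ (k * n + 1) =
      ((List.range' 1 (n - 1)).map (fun i => (fullTwist n i) ^ k)).prod *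
        ((List.range' 1 (n - 1)).map (sigma n)).prod :=
  torusBraid_separated_twists_general n k
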